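/- arXiv:2502.13448 — 2 statements merged into one kernel-verified Lean document; each statement's English description precedes it below -/
import Mathlib

section
/- Let {P_t} be a Markov–Feller semigroup, μ an invariant measure, and suppose that for every pair x₁, x₂ ∈ E, lim_{t→∞} sup_{‖f‖_∞ ≤ 1} |P_t f(x₁) − P_t f(x₂)| = 0. Then for every probability measure ν on E, ‖P_t*ν − μ‖_TV → 0 as t → ∞. -/
/-!
Since `μ = P_t* μ`, coupling `ν` and `μ` by the product measure gives
`‖P_t* ν - μ‖_TV ≤ ∫∫ ‖P_t(x, ·) - P_t(y, ·)‖_TV dν(x) dμ(y)`. The integrand is bounded by `1` and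
tends to `0` pointwise by hypothesis, so the right side tends to `0` by dominated convergence. The
integrand, a supremum over an uncountable family, need not be measurable; dominated convergence is
applied to measurable minorants with the same lower integral.
-/

open MeasureTheory Filter Metric Set Topology

/-- `P_t f (x) = ∫ f dP_t(x,·)`. -/
noncomputable def Pf {E : Type*} [MeasurableSpace E] (P : ℝ → E → Measure E)
    (t : ℝ) (f : E → ℝ) (x : E) : ℝ := ∫ y, f y ∂(P t x)

/-- Total variation distance `(1/2) sup_{‖f‖_∞ ≤ 1} |∫ f dμ₁ − ∫ f dμ₂|`. -/
noncomputable def tvDist {E : Type*} [MeasurableSpace E] (μ₁ μ₂ : Measure E) : ℝ :=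
  (1/2) * ⨆ f : {f : E → ℝ // Measurable f ∧ ∀ x, |f x| ≤ 1},
    |∫ x, f.1 x ∂μ₁ - ∫ x, f.1 x ∂μ₂|

/-- The Cesàro average `Q_t(x,A) = (1/t) ∫₀ᵗ P_s(x,A) ds`. -/
noncomputable def Qavg {E : Type*} [MeasurableSpace E] (P : ℝ → E → Measure E)
    (t : ℝ) (x : E) (A : Set E) : ℝ := (∫ s in (0:ℝ)..t, (P s x A).toReal) / t

/-- `{P_t}` is eventually continuous at `z`: for every bounded Lipschitz `f`,
`limsup_{x→z} limsup_{t→∞} |P_t f(x) − P_t f(z)| = 0`. -/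
def EventuallyContinuousAt {E : Type*} [MetricSpace E] [MeasurableSpace E]
    (P : ℝ → E → Measure E) (z : E) : Prop :=
  ∀ f : E → ℝ, (∃ K, LipschitzWith K f) → (∃ C, ∀ x, |f x| ≤ C) →
    limsup (fun x => limsup (fun t => |Pf P t f x - Pf P t f z|) atTop) (𝓝 z) = 0

/-- `{P_t}` is TV-eventually continuous at `z`:
`limsup_{x→z} limsup_{t→∞} sup_{‖f‖_∞ ≤ 1} |P_t f(x) − P_t f(z)| = 0`. -/
def TVEventuallyContinuousAt {E : Type*} [MetricSpace E] [MeasurableSpace E]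
    (P : ℝ → E → Measure E) (z : E) : Prop :=
  limsup (fun x =>
    limsup (fun t => ⨆ f : {f : E → ℝ // Measurable f ∧ ∀ y, |f y| ≤ 1},
      |Pf P t f.1 x - Pf P t f.1 z|) atTop) (𝓝 z) = 0

open ProbabilityTheory ENNReal

section TotalVariation

variable {α : Type*} [MeasurableSpace α]

theorem tvDist_nonneg (μ₁ μ₂ : Measure α) : 0 ≤ tvDist μ₁ μ₂ :=
  mul_nonneg (by norm_num) (Real.iSup_nonneg fun _ ↦ abs_nonneg _)

theorem abs_integral_le_one {μ : Measure α} [IsProbabilityMeasure μ] {f : α → ℝ}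
    (hf : ∀ x, |f x| ≤ 1) : |∫ x, f x ∂μ| ≤ 1 := by
  simpa using norm_integral_le_of_norm_le_const (μ := μ) (f := f) (C := 1) (ae_of_all _ hf)

theorem abs_integral_sub_integral_le_two (μ₁ μ₂ : Measure α) [IsProbabilityMeasure μ₁]
    [IsProbabilityMeasure μ₂] {f : α → ℝ} (hf : ∀ x, |f x| ≤ 1) :
    |∫ x, f x ∂μ₁ - ∫ x, f x ∂μ₂| ≤ 2 := by
  linarith [abs_sub (∫ x, f x ∂μ₁) (∫ x, f x ∂μ₂), abs_integral_le_one (μ := μ₁) hf,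
    abs_integral_le_one (μ := μ₂) hf]

theorem abs_integral_sub_integral_le_two_mul_tvDist (μ₁ μ₂ : Measure α)
    [IsProbabilityMeasure μ₁] [IsProbabilityMeasure μ₂] {f : α → ℝ} (hf_meas : Measurable f)
    (hf : ∀ x, |f x| ≤ 1) :
    |∫ x, f x ∂μ₁ - ∫ x, f x ∂μ₂| ≤ 2 * tvDist μ₁ μ₂ := by
  have h_bdd : BddAbove (range fun g : {g : α → ℝ // Measurable g ∧ ∀ x, |g x| ≤ 1} ↦
      |∫ x, g.1 x ∂μ₁ - ∫ x, g.1 x ∂μ₂|) :=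
    ⟨2, forall_mem_range.2 fun g ↦ abs_integral_sub_integral_le_two μ₁ μ₂ g.2.2⟩
  rw [tvDist, ← mul_assoc, show (2 : ℝ) * (1 / 2) = 1 by norm_num, one_mul]
  exact le_ciSup (f := fun g : {g : α → ℝ // Measurable g ∧ ∀ x, |g x| ≤ 1} ↦
    |∫ x, g.1 x ∂μ₁ - ∫ x, g.1 x ∂μ₂|) h_bdd ⟨f, hf_meas, hf⟩

theorem tvDist_le_of_forall_abs_integral_sub_le {μ₁ μ₂ : Measure α} {C : ℝ}
    (h : ∀ f : α → ℝ, Measurable f → (∀ x, |f x| ≤ 1) →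
      |∫ x, f x ∂μ₁ - ∫ x, f x ∂μ₂| ≤ 2 * C) :
    tvDist μ₁ μ₂ ≤ C := by
  have : Nonempty {f : α → ℝ // Measurable f ∧ ∀ x, |f x| ≤ 1} :=
    ⟨⟨0, measurable_const, by simp⟩⟩
  have h_sup := ciSup_le fun f : {f : α → ℝ // Measurable f ∧ ∀ x, |f x| ≤ 1} ↦ h f.1 f.2.1 f.2.2
  rw [tvDist]
  linarith

theorem tvDist_le_one (μ₁ μ₂ : Measure α) [IsProbabilityMeasure μ₁] [IsProbabilityMeasure μ₂] :
    tvDist μ₁ μ₂ ≤ 1 :=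
  tvDist_le_of_forall_abs_integral_sub_le fun _ _ hf ↦ by
    simpa using abs_integral_sub_integral_le_two μ₁ μ₂ hf

end TotalVariation

section Lintegral

variable {α ι : Type*} [MeasurableSpace α] {μ : Measure α}

theorem tendsto_lintegral_zero_of_dominated {l : Filter ι} [l.IsCountablyGenerated]
    {F : ι → α → ℝ≥0∞} (bound : α → ℝ≥0∞) (h_bound : ∀ᶠ i in l, ∀ᵐ a ∂μ, F i a ≤ bound a)
    (h_fin : ∫⁻ a, bound a ∂μ ≠ ∞) (h_lim : ∀ᵐ a ∂μ, Tendsto (F · a) l (𝓝 0)) :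
    Tendsto (fun i ↦ ∫⁻ a, F i a ∂μ) l (𝓝 0) := by
  choose G hG_meas hGF hG_eq using fun i ↦ exists_measurable_le_lintegral_eq μ (F i)
  simp_rw [hG_eq]
  have hG_lim : ∀ᵐ a ∂μ, Tendsto (G · a) l (𝓝 0) := h_lim.mono fun a ha ↦
    tendsto_of_tendsto_of_tendsto_of_le_of_le tendsto_const_nhds ha (fun _ ↦ zero_le)
      fun i ↦ hGF i a
  simpa using tendsto_lintegral_filter_of_dominated_convergence bound
    (Eventually.of_forall hG_meas)
    (h_bound.mono fun i hi ↦ hi.mono fun a ha ↦ (hGF i a).trans ha) h_fin hG_lim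

end Lintegral

section Kernel

variable {α β : Type*} [MeasurableSpace α] [MeasurableSpace β]

theorem integral_bind_kernel {E : Type*} [NormedAddCommGroup E] [NormedSpace ℝ E]
    (κ : Kernel α β) (μ : Measure α) {f : β → E} (hf : Integrable f (κ ∘ₘ μ)) :
    ∫ y, f y ∂(κ ∘ₘ μ) = ∫ x, ∫ y, f y ∂κ x ∂μ := by
  rw [Measure.comp_eq_comp_const_apply] at hf ⊢
  rw [Kernel.integral_comp hf]
  simp

theorem integral_comp_sub_integral_comp_eq_integral_prod (κ : Kernel α β) [IsMarkovKernel κ]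
    (ν μ : Measure α) [IsProbabilityMeasure ν] [IsProbabilityMeasure μ] {f : β → ℝ}
    (hf_meas : Measurable f) (hf : ∀ y, |f y| ≤ 1) :
    ∫ y, f y ∂(κ ∘ₘ ν) - ∫ y, f y ∂(κ ∘ₘ μ) =
      ∫ p, (∫ y, f y ∂κ p.1 - ∫ y, f y ∂κ p.2) ∂(ν.prod μ) := by
  have hf_int : ∀ ρ : Measure β, IsFiniteMeasure ρ → Integrable f ρ := fun _ _ ↦
    .of_bound hf_meas.aestronglyMeasurable 1 (ae_of_all _ hf)
  have hφ_meas : Measurable fun x ↦ ∫ y, f y ∂κ x :=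
    hf_meas.stronglyMeasurable.integral_kernel.measurable
  have hφ_int : ∀ ρ : Measure α, IsFiniteMeasure ρ → Integrable (fun x ↦ ∫ y, f y ∂κ x) ρ :=
    fun _ _ ↦ .of_bound hφ_meas.aestronglyMeasurable 1 (ae_of_all _ fun _ ↦ abs_integral_le_one hf)
  rw [integral_bind_kernel κ ν (hf_int _ inferInstance),
    integral_bind_kernel κ μ (hf_int _ inferInstance),
    integral_sub ((hφ_int _ inferInstance).comp_fst μ) ((hφ_int _ inferInstance).comp_snd ν),
    integral_fun_fst (fun x ↦ ∫ y, f y ∂κ x), integral_fun_snd (fun x ↦ ∫ y, f y ∂κ x)]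
  simp

theorem tvDist_comp_le_lintegral_tvDist (κ : Kernel α β) [IsMarkovKernel κ]
    (ν μ : Measure α) [IsProbabilityMeasure ν] [IsProbabilityMeasure μ] :
    tvDist (κ ∘ₘ ν) (κ ∘ₘ μ) ≤
      (∫⁻ p, ENNReal.ofReal (tvDist (κ p.1) (κ p.2)) ∂(ν.prod μ)).toReal := by
  set I := ∫⁻ p, ENNReal.ofReal (tvDist (κ p.1) (κ p.2)) ∂(ν.prod μ)
  have hI : I ≠ ∞ := by
    refine ne_top_of_le_ne_top one_ne_top ?_
    calc I ≤ ∫⁻ _, 1 ∂(ν.prod μ) := lintegral_mono fun p ↦ ofReal_le_one.2 (tvDist_le_one _ _)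
      _ = 1 := by simp
  refine tvDist_le_of_forall_abs_integral_sub_le fun f hf_meas hf ↦ ?_
  rw [← toReal_ofNat 2, ← toReal_mul, ← ofReal_le_iff_le_toReal (mul_ne_top ofNat_ne_top hI),
    integral_comp_sub_integral_comp_eq_integral_prod κ ν μ hf_meas hf, ← Real.enorm_eq_ofReal_abs,
    ← lintegral_const_mul' _ _ ofNat_ne_top]
  refine (enorm_integral_le_lintegral_enorm _).trans (lintegral_mono fun p ↦ ?_)
  rw [Real.enorm_eq_ofReal_abs, ← ofReal_ofNat 2, ← ofReal_mul zero_le_two]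
  exact ofReal_le_ofReal (abs_integral_sub_integral_le_two_mul_tvDist _ _ hf_meas hf)

end Kernel

theorem stmt7_general {E : Type*} [MeasurableSpace E]
    (P : ℝ → E → Measure E)
    (hprob : ∀ t x, IsProbabilityMeasure (P t x))
    (hmeas : ∀ t, Measurable (P t))
    (μ : Measure E) (hμprob : IsProbabilityMeasure μ)
    (hinv : ∀ t : ℝ, 0 ≤ t → μ.bind (P t) = μ)
    (hconv : ∀ x₁ x₂ : E,
      Tendsto (fun t => ⨆ f : {f : E → ℝ // Measurable f ∧ ∀ y, |f y| ≤ 1},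
        |Pf P t f.1 x₁ - Pf P t f.1 x₂|) atTop (𝓝 0)) :
    ∀ ν : Measure E, IsProbabilityMeasure ν →
      Tendsto (fun t => tvDist (ν.bind (P t)) μ) atTop (𝓝 0) := by
  intro ν _
  let κ : ℝ → Kernel E E := fun t ↦ ⟨P t, hmeas t⟩
  have : ∀ t, IsMarkovKernel (κ t) := fun t ↦ ⟨hprob t⟩
  have h_pointwise (x y : E) :
      Tendsto (fun t ↦ ENNReal.ofReal (tvDist (P t x) (P t y))) atTop (𝓝 0) := by
    have h := ENNReal.tendsto_ofReal ((hconv x y).const_mul (1 / 2))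
    rwa [mul_zero, ofReal_zero] at h
  have h_lintegral : Tendsto (fun t ↦ ∫⁻ p, ENNReal.ofReal (tvDist (P t p.1) (P t p.2))
      ∂(ν.prod μ)) atTop (𝓝 0) :=
    tendsto_lintegral_zero_of_dominated 1
      (Eventually.of_forall fun t ↦ ae_of_all _ fun p ↦ ofReal_le_one.2 (tvDist_le_one _ _))
      (by simp) (ae_of_all _ fun p ↦ h_pointwise p.1 p.2)
  have h_le : ∀ t ≥ 0, tvDist (ν.bind (P t)) μ ≤
      (∫⁻ p, ENNReal.ofReal (tvDist (P t p.1) (P t p.2)) ∂(ν.prod μ)).toReal := fun t ht ↦ by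
    conv_lhs => rw [← hinv t ht]
    exact tvDist_comp_le_lintegral_tvDist (κ t) ν μ
  exact squeeze_zero' (Eventually.of_forall fun t ↦ tvDist_nonneg _ _)
    ((eventually_ge_atTop 0).mono h_le)
    (toReal_zero ▸ (tendsto_toReal zero_ne_top).comp h_lintegral)

theorem stmt7 {E : Type*} [MetricSpace E] [CompleteSpace E] [SecondCountableTopology E]
    [MeasurableSpace E] [BorelSpace E]
    (P : ℝ → E → Measure E)
    (hprob : ∀ t x, IsProbabilityMeasure (P t x))
    (hmeas : ∀ t, Measurable (P t))
    (hP0 : ∀ x, P 0 x = Measure.dirac x)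
    (hsemi : ∀ s t : ℝ, 0 ≤ s → 0 ≤ t → ∀ x, P (s + t) x = (P s x).bind (P t))
    (hFeller : ∀ (t : ℝ) (f : BoundedContinuousFunction E ℝ),
      Continuous fun x => ∫ y, f y ∂(P t x))
    (μ : Measure E) (hμprob : IsProbabilityMeasure μ)
    (hinv : ∀ t : ℝ, 0 ≤ t → μ.bind (P t) = μ)
    (hconv : ∀ x₁ x₂ : E,
      Tendsto (fun t => ⨆ f : {f : E → ℝ // Measurable f ∧ ∀ y, |f y| ≤ 1},
        |Pf P t f.1 x₁ - Pf P t f.1 x₂|) atTop (𝓝 0)) :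
    ∀ ν : Measure E, IsProbabilityMeasure ν →
      Tendsto (fun t => tvDist (ν.bind (P t)) μ) atTop (𝓝 0) :=
  stmt7_general P hprob hmeas μ hμprob hinv hconv
end

section
/- Let {P_t} be a Markov semigroup on a Polish space E that is eventually continuous at z and suppose θ := liminf_{t→∞} P_t(z, B(z, ε/2)) > 0 for a given ε > 0. Then there exists δ > 0 such that for all y ∈ B(z,δ), liminf_{t→∞} P_t(y, B(z,ε)) ≥ θ/4. -/
/-!
Test eventual continuity against the tent `f = max (1 - d(·, z)/ε) 0`, which satisfies
`(1/2) 1_{B(z, ε/2)} ≤ f ≤ 1_{B(z, ε)}`. Eventually in `t`, `P_t(z, B(z, ε/2)) > 3θ/4`, so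
`P_t f(z) > 3θ/8`; for `y` close to `z`, eventual continuity gives eventually
`P_t f(y) > P_t f(z) - θ/8 > θ/4`, and `P_t(y, B(z, ε)) ≥ P_t f(y)`.
-/

open MeasureTheory Filter Metric Set Topology

noncomputable def tent {E : Type*} [PseudoMetricSpace E] (z : E) (ε : ℝ) (x : E) : ℝ :=
  max (1 - dist x z / ε) 0

section Tent

variable {E : Type*} [PseudoMetricSpace E] {z : E} {ε : ℝ}

lemma tent_nonneg (x : E) : 0 ≤ tent z ε x := le_max_right _ _

lemma tent_le_one (hε : 0 ≤ ε) (x : E) : tent z ε x ≤ 1 :=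
  max_le (by linarith [(div_nonneg dist_nonneg hε : 0 ≤ dist x z / ε)]) zero_le_one

lemma abs_tent_le_one (hε : 0 ≤ ε) (x : E) : |tent z ε x| ≤ 1 := by
  rw [abs_of_nonneg (tent_nonneg x)]
  exact tent_le_one hε x

lemma lipschitzWith_tent (hε : 0 ≤ ε) : LipschitzWith (ε⁻¹).toNNReal (tent z ε) := by
  refine (LipschitzWith.of_le_add_mul' ε⁻¹ fun x y => ?_).max_const 0
  have htri : dist y z ≤ dist x y + dist x z := dist_triangle_left y z x
  have := mul_le_mul_of_nonneg_left htri (inv_nonneg.2 hε)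
  simp only [div_eq_inv_mul]
  linarith

lemma half_indicator_ball_le_tent (hε : 0 < ε) :
    (ball z (ε / 2)).indicator (fun _ => (1 / 2 : ℝ)) ≤ tent z ε := by
  intro x
  by_cases hx : x ∈ ball z (ε / 2)
  · rw [indicator_of_mem hx]
    have : dist x z / ε < 1 / 2 := by rw [div_lt_iff₀ hε]; linarith [mem_ball.1 hx]
    exact le_max_of_le_left (by linarith)
  · rw [indicator_of_notMem hx]
    exact tent_nonneg x

lemma tent_le_indicator_ball (hε : 0 < ε) :
    tent z ε ≤ (ball z ε).indicator (fun _ => (1 : ℝ)) := by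
  intro x
  by_cases hx : x ∈ ball z ε
  · rw [indicator_of_mem hx]
    exact tent_le_one hε.le x
  · rw [indicator_of_notMem hx]
    have : 1 ≤ dist x z / ε := by rw [le_div_iff₀ hε]; simpa using hx
    exact max_le (by linarith) le_rfl

variable [MeasurableSpace E] {μ : Measure E}

lemma abs_integral_tent_le_one [IsProbabilityMeasure μ] (hε : 0 ≤ ε) :
    |∫ x, tent z ε x ∂μ| ≤ 1 := by
  simpa using norm_integral_le_of_norm_le_const (μ := μ) (C := 1)
    (ae_of_all _ fun x => (Real.norm_eq_abs _).trans_le (abs_tent_le_one (z := z) hε x))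

variable [OpensMeasurableSpace E]

lemma integrable_tent [IsFiniteMeasure μ] (hε : 0 ≤ ε) : Integrable (tent z ε) μ :=
  Integrable.of_bound (lipschitzWith_tent hε).continuous.aestronglyMeasurable 1
    (ae_of_all _ fun x => (Real.norm_eq_abs _).trans_le (abs_tent_le_one hε x))

lemma half_measureReal_ball_le_integral_tent [IsFiniteMeasure μ] (hε : 0 < ε) :
    1 / 2 * μ.real (ball z (ε / 2)) ≤ ∫ x, tent z ε x ∂μ := by
  have := integral_mono ((integrable_const (μ := μ) _).indicator measurableSet_ball)
    (integrable_tent hε.le) (half_indicator_ball_le_tent (z := z) hε)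
  rwa [integral_indicator_const _ measurableSet_ball, smul_eq_mul, mul_comm] at this

lemma integral_tent_le_measureReal_ball [IsFiniteMeasure μ] (hε : 0 < ε) :
    ∫ x, tent z ε x ∂μ ≤ μ.real (ball z ε) := by
  have := integral_mono (integrable_tent hε.le)
    ((integrable_const (μ := μ) _).indicator measurableSet_ball)
    (tent_le_indicator_ball (z := z) hε)
  rwa [integral_indicator_const _ measurableSet_ball, smul_eq_mul, mul_one] at this

end Tent

lemma eventually_eventually_lt_of_limsup_limsup_eq_zero {X T : Type*} {l : Filter X}
    {l' : Filter T} [l'.NeBot] {F : X → T → ℝ} {c C : ℝ} (hc : ∀ x t, c ≤ F x t)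
    (hC : ∀ x t, F x t ≤ C) (h : limsup (fun x => limsup (F x) l') l = 0) {η : ℝ}
    (hη : 0 < η) :
    ∀ᶠ x in l, ∀ᶠ t in l', F x t < η := by
  have hlimsup_le : ∀ x, limsup (F x) l' ≤ C := fun x =>
    limsup_le_of_le (isCoboundedUnder_le_of_le l' (hc x)) (Eventually.of_forall (hC x))
  filter_upwards [eventually_lt_of_limsup_lt (h ▸ hη) (isBoundedUnder_of ⟨C, hlimsup_le⟩)]
    with x hx
  exact eventually_lt_of_limsup_lt hx (isBoundedUnder_of ⟨C, hC x⟩)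

theorem stmt9_general {E : Type*} [MetricSpace E]
    [MeasurableSpace E] [BorelSpace E]
    (P : ℝ → E → Measure E)
    (hprob : ∀ t x, IsProbabilityMeasure (P t x))
    (z : E) (hec : EventuallyContinuousAt P z)
    (ε θ : ℝ) (hε : 0 < ε)
    (hθ : θ = liminf (fun t => (P t z (ball z (ε/2))).toReal) atTop) (hθpos : 0 < θ) :
    ∃ δ > (0:ℝ), ∀ y ∈ ball z δ,
      θ/4 ≤ liminf (fun t => (P t y (ball z ε)).toReal) atTop := by
  have hPf_le : ∀ t x, |Pf P t (tent z ε) x| ≤ 1 := fun t x =>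
    have := hprob t x
    abs_integral_tent_le_one hε.le
  have hdiff : ∀ x t, |Pf P t (tent z ε) x - Pf P t (tent z ε) z| ≤ 2 := fun x t =>
    (abs_sub _ _).trans (by linarith [hPf_le t x, hPf_le t z])
  have hcont := hec (tent z ε) ⟨_, lipschitzWith_tent hε.le⟩ ⟨1, abs_tent_le_one hε.le⟩
  obtain ⟨δ, hδ, hnear⟩ := eventually_nhds_iff_ball.1 <|
    eventually_eventually_lt_of_limsup_limsup_eq_zero
      (F := fun x t => |Pf P t (tent z ε) x - Pf P t (tent z ε) z|)
      (fun _ _ => abs_nonneg _) hdiff hcont (by positivity : 0 < θ / 8)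
  have hmass : ∀ᶠ t in atTop, 3 * θ / 4 < (P t z (ball z (ε / 2))).toReal :=
    eventually_lt_of_lt_liminf (by rw [← hθ]; linarith)
      (isBoundedUnder_of ⟨0, fun _ => ENNReal.toReal_nonneg⟩)
  refine ⟨δ, hδ, fun y hy => le_liminf_of_le ?_ ?_⟩
  · exact isCoboundedUnder_ge_of_le atTop (x := 1) fun t =>
      have := hprob t y
      measureReal_le_one
  filter_upwards [hnear y hy, hmass] with t hclose hbig
  have := hprob t y
  have := hprob t z
  have hlower : 1 / 2 * (P t z).real (ball z (ε / 2)) ≤ Pf P t (tent z ε) z :=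
    half_measureReal_ball_le_integral_tent hε
  have hupper : Pf P t (tent z ε) y ≤ (P t y).real (ball z ε) :=
    integral_tent_le_measureReal_ball hε
  rw [measureReal_def] at hlower hupper
  linarith [neg_abs_le (Pf P t (tent z ε) y - Pf P t (tent z ε) z)]

theorem stmt9 {E : Type*} [MetricSpace E] [CompleteSpace E] [SecondCountableTopology E]
    [MeasurableSpace E] [BorelSpace E]
    (P : ℝ → E → Measure E)
    (hprob : ∀ t x, IsProbabilityMeasure (P t x))
    (hmeas : ∀ t, Measurable (P t))
    (hP0 : ∀ x, P 0 x = Measure.dirac x)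
    (hsemi : ∀ s t : ℝ, 0 ≤ s → 0 ≤ t → ∀ x, P (s + t) x = (P s x).bind (P t))
    (z : E) (hec : EventuallyContinuousAt P z)
    (ε θ : ℝ) (hε : 0 < ε)
    (hθ : θ = liminf (fun t => (P t z (ball z (ε/2))).toReal) atTop) (hθpos : 0 < θ) :
    ∃ δ > (0:ℝ), ∀ y ∈ ball z δ,
      θ/4 ≤ liminf (fun t => (P t y (ball z ε)).toReal) atTop :=
  stmt9_general P hprob z hec ε θ hε hθ hθpos
end
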